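/- arXiv:1711.01333 — 3 statements merged into one kernel-verified Lean document; each statement's English description precedes it below -/
import Mathlib

section
/- In the win-only feedback setting with estimator ũ(b) as defined (equal to (r(b)−1)·x(b)/Pr[A] on event A, and −(1−x(b))/Pr[¬A] on ¬A), for every b ∈ B: E[ũ(b)²] ≤ 4·x(b)/Pr[A] + (1−x(b))/Pr[¬A]. -/
/-- Second moment bound for the WIN-EXP estimator in the win-only feedback
setting: `E[ũ(b)²] ≤ 4 x(b)/Pr[A] + (1 - x(b))/Pr[¬A]`. -/
theorem winexp_binary_second_moment
    {B : Type*} [Fintype B] [Nonempty B]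
    (x : B → ℝ) (hx : ∀ b, x b ∈ Set.Icc (0 : ℝ) 1)
    (r : B → ℝ) (hr : ∀ b, r b ∈ Set.Icc (-1 : ℝ) 1)
    (π : B → ℝ) (hπ0 : ∀ b, 0 ≤ π b) (hπ1 : ∑ b, π b = 1)
    (hA0 : 0 < ∑ b, π b * x b) (hA1 : ∑ b, π b * x b < 1) (b : B) :
    (∑ b', π b' * x b') * ((r b - 1) * x b / (∑ b', π b' * x b')) ^ 2
      + (1 - ∑ b', π b' * x b') * ((1 - x b) / (1 - ∑ b', π b' * x b')) ^ 2
      ≤ 4 * x b / (∑ b', π b' * x b') + (1 - x b) / (1 - ∑ b', π b' * x b') := by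
  set P := ∑ b', π b' * x b' with hP
  have hP0 : 0 < P := hA0
  have hQ0 : 0 < 1 - P := by linarith
  obtain ⟨hx0, hx1⟩ := hx b
  obtain ⟨hr0, hr1⟩ := hr b
  have h1 : P * ((r b - 1) * x b / P) ^ 2 = (r b - 1) ^ 2 * x b ^ 2 / P := by
    field_simp
  have h2 : (1 - P) * ((1 - x b) / (1 - P)) ^ 2 = (1 - x b) ^ 2 / (1 - P) := by
    field_simp
  rw [h1, h2]
  have ha : (r b - 1) ^ 2 ≤ 4 := by nlinarith
  have hxx : x b ^ 2 ≤ x b := by nlinarith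
  have hb1 : (r b - 1) ^ 2 * x b ^ 2 ≤ 4 * x b := by
    nlinarith [mul_le_mul ha hxx (sq_nonneg (x b)) (by norm_num : (0:ℝ) ≤ 4)]
  have hb2 : (1 - x b) ^ 2 ≤ 1 - x b := by nlinarith
  gcongr
end

section
/- Second moment of the batch estimator: Let O be a finite set, b fixed, and for each possible drawn action b_t let f(·|b_t) be a random probability vector on O with E[f(o)|b_t] satisfying Σ_{b_t} E[f(o)|b_t]·π(b_t) = Pr[o]. Let Q : B × O → [-1,1]. Define ũ(b) = Σ_{o∈O} (Pr[o|b]/Pr[o])·f(o)·(Q(b,o) − 1), where Pr[o|b] ∈ [0,1] and Pr[o] > 0. Then E[ũ(b)²] ≤ 4·Σ_{o∈O} Pr[o|b]/Pr[o]. -/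
open MeasureTheory

/-- Second moment of the batch estimator: if `f` is a random probability vector on
the finite outcome set `O` with `E[f(o)] = Pr[o] > 0`, `Pr[o|b] ∈ [0,1]`, and
`Q(b,·) ∈ [-1,1]`, then the estimator
`ũ(b) = ∑ o, (Pr[o|b]/Pr[o])·f(o)·(Q(b,o) − 1)` satisfies
`E[ũ(b)²] ≤ 4 ∑ o, Pr[o|b]/Pr[o]`. -/
theorem batch_estimator_second_moment
    {Ω : Type*} [MeasurableSpace Ω] (μ : Measure Ω) [IsProbabilityMeasure μ]
    {O : Type*} [Fintype O]
    (f : Ω → O → ℝ) (hfmeas : ∀ o, Measurable (fun ω => f ω o))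
    (hf0 : ∀ ω o, 0 ≤ f ω o) (hf1 : ∀ ω, ∑ o, f ω o = 1)
    (p q : O → ℝ) (hp : ∀ o, p o ∈ Set.Icc (0 : ℝ) 1) (hq : ∀ o, 0 < q o)
    (hmean : ∀ o, ∫ ω, f ω o ∂μ = q o)
    (Q : O → ℝ) (hQ : ∀ o, Q o ∈ Set.Icc (-1 : ℝ) 1) :
    ∫ ω, (∑ o, (p o / q o) * f ω o * (Q o - 1)) ^ 2 ∂μ
      ≤ 4 * ∑ o, p o / q o := by
  set c : O → ℝ := fun o => (p o / q o) * (Q o - 1) with hc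
  have hfle1 : ∀ ω o, f ω o ≤ 1 := by
    intro ω o
    calc f ω o ≤ ∑ o', f ω o' := Finset.single_le_sum (fun i _ => hf0 ω i) (Finset.mem_univ o)
    _ = 1 := hf1 ω
  -- pointwise Jensen
  have key : ∀ ω, (∑ o, (p o / q o) * f ω o * (Q o - 1)) ^ 2
      ≤ ∑ o, f ω o * (c o) ^ 2 := by
    intro ω
    have h1 : (∑ o, (p o / q o) * f ω o * (Q o - 1))
        = ∑ o, Real.sqrt (f ω o) * (Real.sqrt (f ω o) * c o) := by
      apply Finset.sum_congr rfl
      intro o _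
      rw [← mul_assoc, Real.mul_self_sqrt (hf0 ω o), hc]; ring
    rw [h1]
    calc (∑ o, Real.sqrt (f ω o) * (Real.sqrt (f ω o) * c o)) ^ 2
        ≤ (∑ o, Real.sqrt (f ω o) ^ 2) * (∑ o, (Real.sqrt (f ω o) * c o) ^ 2) :=
          Finset.sum_mul_sq_le_sq_mul_sq _ _ _
      _ = ∑ o, f ω o * (c o) ^ 2 := by
          have : (∑ o, Real.sqrt (f ω o) ^ 2) = 1 := by
            rw [← hf1 ω]; exact Finset.sum_congr rfl fun o _ => Real.sq_sqrt (hf0 ω o)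
          rw [this, one_mul]
          exact Finset.sum_congr rfl fun o _ => by
            rw [mul_pow, Real.sq_sqrt (hf0 ω o)]
  have hintR : ∀ o, Integrable (fun ω => f ω o * (c o) ^ 2) μ := by
    intro o
    have hfint : Integrable (fun ω => f ω o) μ := by
      apply Integrable.mono' (integrable_const (1:ℝ)) (hfmeas o).aestronglyMeasurable
      exact Filter.Eventually.of_forall fun ω => by
        rw [Real.norm_eq_abs, abs_of_nonneg (hf0 ω o)]; exact hfle1 ω o
    exact hfint.mul_const _
  have hintL : Integrable (fun ω => (∑ o, (p o / q o) * f ω o * (Q o - 1)) ^ 2) μ := by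
    apply Integrable.mono' (g := fun _ => ∑ o, (c o)^2) (integrable_const _)
    · apply Measurable.aestronglyMeasurable
      apply Measurable.pow_const
      exact Finset.measurable_sum _ fun o _ => ((hfmeas o).const_mul _).mul_const _
    · refine Filter.Eventually.of_forall fun ω => ?_
      rw [Real.norm_eq_abs, abs_of_nonneg (sq_nonneg _)]
      refine (key ω).trans (Finset.sum_le_sum fun o _ => ?_)
      nlinarith [hf0 ω o, hfle1 ω o, sq_nonneg (c o)]
  calc ∫ ω, (∑ o, (p o / q o) * f ω o * (Q o - 1)) ^ 2 ∂μ
      ≤ ∫ ω, ∑ o, f ω o * (c o) ^ 2 ∂μ := by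
        exact integral_mono hintL (integrable_finset_sum _ fun o _ => hintR o)
          (fun ω => key ω)
    _ = ∑ o, q o * (c o) ^ 2 := by
        rw [integral_finset_sum _ fun o _ => hintR o]
        exact Finset.sum_congr rfl fun o _ => by rw [integral_mul_const, hmean o]
    _ ≤ ∑ o, 4 * (p o / q o) := by
        apply Finset.sum_le_sum
        intro o _
        have hq' := hq o
        have hp0 := (hp o).1
        have hp1 := (hp o).2
        have hQ1 := (hQ o).1
        have hQ2 := (hQ o).2
        have hQsq : (Q o - 1)^2 ≤ 4 := by nlinarith
        have : q o * (c o)^2 = p o ^ 2 / q o * (Q o - 1)^2 := by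
          rw [hc]; field_simp
        rw [this]
        have h1 : p o ^ 2 / q o * (Q o - 1)^2 ≤ p o / q o * 4 := by
          apply mul_le_mul _ hQsq (sq_nonneg _) (by positivity)
          gcongr
          nlinarith
        linarith
    _ = 4 * ∑ o, p o / q o := by rw [Finset.mul_sum]
end

section
/- Unbiasedness of graph estimator over retained outcomes: Let G_ε = (O_ε, E_ε) be a directed graph on a finite set O_ε with self-loops, with in-neighborhoods N^{in}(o) and out-neighborhoods N^{out}(o) satisfying o' ∈ N^{out}(o) ⟺ o ∈ N^{in}(o'). Let Pr[·] be positive weights on O_ε, r : B × O_ε → ℝ, and Pr[·|b] nonnegative weights. If the random outcome o_t is drawn from a distribution q on a superset O ⊇ O_ε with q(o) = Pr[o] for o ∈ O_ε, then E[𝟙{o_t ∈ O_ε}·Σ_{o ∈ N^{out}(o_t)} (r(b,o) − 1)·Pr[o|b]/(Σ_{o' ∈ N^{in}(o)} Pr[o'])] = Σ_{o ∈ O_ε} (r(b,o) − 1)·Pr[o|b]. -/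
/-- Unbiasedness of the feedback-graph estimator over retained outcomes: the
expectation (under the outcome distribution `q`) of the graph-truncated
importance-weighted estimator equals `∑_{o ∈ O_ε} (r(b,o) − 1)·Pr[o|b]`. -/
theorem graph_estimator_unbiased_retained {O : Type*} [Fintype O] [DecidableEq O]
    (Oε : Finset O) (Nin Nout : O → Finset O)
    (hNin : ∀ o, Nin o ⊆ Oε) (hNout : ∀ o, Nout o ⊆ Oε)
    (hself : ∀ o ∈ Oε, o ∈ Nin o)
    (hdual : ∀ o o', o' ∈ Nout o ↔ o ∈ Nin o')
    (q : O → ℝ) (hq0 : ∀ o, 0 ≤ q o) (hq1 : ∑ o, q o = 1)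
    (hqpos : ∀ o ∈ Oε, 0 < ∑ o' ∈ Nin o, q o')
    (r p : O → ℝ) (hp0 : ∀ o, 0 ≤ p o) :
    ∑ ot : O, q ot * (if ot ∈ Oε then
        ∑ o ∈ Nout ot, (r o - 1) * p o / (∑ o' ∈ Nin o, q o') else 0)
      = ∑ o ∈ Oε, (r o - 1) * p o := by
  have h1 : ∑ ot : O, q ot * (if ot ∈ Oε then
        ∑ o ∈ Nout ot, (r o - 1) * p o / (∑ o' ∈ Nin o, q o') else 0)
      = ∑ ot ∈ Oε, ∑ o ∈ Nout ot, q ot * ((r o - 1) * p o / (∑ o' ∈ Nin o, q o')) := by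
    rw [← Finset.sum_filter_add_sum_filter_not Finset.univ (· ∈ Oε)]
    have h2 : ∑ ot ∈ Finset.univ.filter (¬ · ∈ Oε), q ot * (if ot ∈ Oε then
        ∑ o ∈ Nout ot, (r o - 1) * p o / (∑ o' ∈ Nin o, q o') else 0) = 0 := by
      apply Finset.sum_eq_zero
      intro ot hot
      simp at hot
      simp [hot]
    rw [h2, add_zero]
    have h3 : Finset.univ.filter (· ∈ Oε) = Oε := by
      ext; simp
    rw [h3]
    apply Finset.sum_congr rfl
    intro ot hot
    rw [if_pos hot, Finset.mul_sum]
  rw [h1]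
  rw [Finset.sum_comm' (t' := Oε) (s' := Nin)]
  · apply Finset.sum_congr rfl
    intro o ho
    rw [← Finset.sum_mul]
    rw [mul_comm, div_mul_cancel₀ _ (hqpos o ho).ne']
  · intro ot o
    constructor
    · rintro ⟨h1', h2'⟩
      exact ⟨(hdual ot o).mp h2', hNout ot h2'⟩
    · rintro ⟨h1', h2'⟩
      exact ⟨hNin o h1', (hdual ot o).mpr h1'⟩
end
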